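/- Let N be a positive integer and let L² be the Hilbert space of square-integrable complex functions on [0,1)^N with Lebesgue measure. Given complex numbers a_α for each α ⊆ {1,...,N}, define the bounded operator (𝒜u)(k) = Σ_{α ⊆ {1,...,N}} a_α ∫_{[0,1)^{|α|}} u(k with coordinates in α replaced by x_α) dx_α. Then the spectrum of 𝒜 equals the finite set {Σ_{β ⊆ α} a_β : α ⊆ {1,...,N}}. -/

import Mathlib

open MeasureTheory

/-- The cube `[0,1)^ι` with Lebesgue measure, modelled as the product of the
Lebesgue measure on `ℝ` restricted to `[0,1)` over each coordinate. -/
noncomputable def cubeMeasure (ι : Type*) [Fintype ι] : Measure (ι → ℝ) :=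
  Measure.pi fun _ => (volume : Measure ℝ).restrict (Set.Ico 0 1)

/-- `∫_{[0,1)^{|α|}} u(k with the coordinates in α replaced by x_α) dx_α`:
integration of `u` over the coordinates indexed by `α`, the remaining
coordinates being those of `k`.  For `α = ∅` this is `u k`. -/
noncomputable def partialIntegral {N : ℕ} (α : Finset (Fin N))
    (u : (Fin N → ℝ) → ℂ) (k : Fin N → ℝ) : ℂ :=
  ∫ x : {j // j ∈ α} → ℝ, u (fun j => if h : j ∈ α then x ⟨j, h⟩ else k j)
    ∂(cubeMeasure {j // j ∈ α})

/-!
Pulled back from the torus `(ℝ/ℤ)^N`, the exponentials `e_n(k) = exp (2πi ⟨n, k⟩)`, `n ∈ ℤ^N`,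
span a dense subspace of `L²([0,1)^N)`. Integrating `e_n` over the coordinates in `α` returns
`e_n` if `n` vanishes on `α` and `0` otherwise, so `e_n` is an eigenvector of `𝒜` with eigenvalue
`Σ_{β ⊆ Z(n)} a_β`, where `Z(n)` is the zero set of `n`; every subset of `{1, …, N}` is such a zero
set. These finitely many eigenvalues are the roots of `P = ∏ (X - λ)`; as `P(𝒜)` vanishes on a
dense set, `P(𝒜) = 0`, and the spectral mapping theorem confines the spectrum to the roots of `P`.
-/

open UnitAddTorus

instance (ι : Type*) [Fintype ι] : IsProbabilityMeasure (cubeMeasure ι) :=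
  have : IsProbabilityMeasure ((volume : Measure ℝ).restrict (Set.Ico 0 1)) := ⟨by simp⟩
  Measure.pi.instIsProbabilityMeasure _

section Spectrum

open Polynomial

variable {𝕜 E : Type*} [NontriviallyNormedField 𝕜] [NormedAddCommGroup E] [NormedSpace 𝕜 E]

theorem ContinuousLinearMap.aeval_apply_of_apply_eq_smul {T : E →L[𝕜] E} {μ : 𝕜} {x : E}
    (hx : T x = μ • x) (p : 𝕜[X]) : aeval T p x = p.eval μ • x := by
  induction p using Polynomial.induction_on with
  | C c => simp [Algebra.algebraMap_eq_smul_one]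
  | add p q hp hq => simp [hp, hq, add_smul]
  | monomial n c ih =>
    rw [pow_succ, ← mul_assoc, map_mul, aeval_X, mul_apply_eq_comp, hx, map_smul, ih, smul_smul,
      eval_mul_X, mul_comm]

theorem ContinuousLinearMap.spectrum_eq_range_of_dense_span_eigenvectors [CompleteSpace E]
    {ι : Type*} (T : E →L[𝕜] E) (v : ι → E) (μ : ι → 𝕜)
    (hv : Dense (Submodule.span 𝕜 (Set.range v) : Set E)) (hv0 : ∀ i, v i ≠ 0)
    (hTv : ∀ i, T (v i) = μ i • v i) (hμ : (Set.range μ).Finite) :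
    spectrum 𝕜 T = Set.range μ := by
  refine subset_antisymm (fun z hz => ?_) ?_
  · rcases subsingleton_or_nontrivial E with hE | hE
    · simp [spectrum.of_subsingleton] at hz
    set P : 𝕜[X] := ∏ c ∈ hμ.toFinset, (X - C c)
    have hP : aeval T P = 0 := by
      refine ContinuousLinearMap.ext_on hv ?_
      rintro - ⟨i, rfl⟩
      rw [aeval_apply_of_apply_eq_smul (hTv i), zero_apply, smul_eq_zero]
      left
      simp [P, eval_prod, Finset.prod_eq_zero_iff, sub_eq_zero]
    have hPz := spectrum.subset_polynomial_aeval T P ⟨z, hz, rfl⟩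
    rw [hP, spectrum.zero_eq, Set.mem_singleton_iff] at hPz
    simpa [P, eval_prod, Finset.prod_eq_zero_iff, sub_eq_zero] using hPz
  · rintro - ⟨i, rfl⟩
    rw [ContinuousLinearMap.spectrum_eq]
    exact Module.End.HasEigenvalue.mem_spectrum <| Module.End.hasEigenvalue_of_hasEigenvector
      ⟨Module.End.mem_eigenspace_iff.mpr (hTv i), hv0 i⟩

end Spectrum

namespace MeasureTheory

variable {α β E : Type*} [MeasurableSpace α] [MeasurableSpace β] [NormedAddCommGroup E]
  {μ : Measure α} {ν : Measure β}

theorem ae_eq_integral_left_of_ae_eq_prod [NormedSpace ℝ E] [SFinite μ] [SFinite ν]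
    {f g : α × β → E} (h : f =ᵐ[μ.prod ν] g) :
    (fun y => ∫ x, f (x, y) ∂μ) =ᵐ[ν] fun y => ∫ x, g (x, y) ∂μ :=
  (Measure.ae_ae_of_ae_prod
    (Measure.measurePreserving_swap.quasiMeasurePreserving.ae_eq_comp h)).mono
    fun _ hy => integral_congr_ae hy

theorem Lp.compMeasurePreserving_surjective {p : ENNReal} {f : α → β}
    (hf : MeasurePreserving f μ ν) {g : β → α} (hg : Measurable g) (hgf : g ∘ f =ᵐ[μ] id) :
    Function.Surjective (Lp.compMeasurePreserving (E := E) (p := p) f hf) := by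
  have hg' : MeasurePreserving g ν μ := ⟨hg, by
    rw [← hf.map_eq, Measure.map_map hg hf.measurable, Measure.map_congr hgf, Measure.map_id]⟩
  refine fun u => ⟨Lp.compMeasurePreserving g hg' u, Lp.ext ?_⟩
  filter_upwards [Lp.coeFn_compMeasurePreserving (Lp.compMeasurePreserving g hg' u) hf,
    hf.quasiMeasurePreserving.ae_eq_comp (Lp.coeFn_compMeasurePreserving u hg'), hgf]
    with x h₁ h₂ h₃
  simp only [Function.comp_apply, id_eq] at h₁ h₂ h₃
  rw [h₁, h₂, h₃]

end MeasureTheory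

theorem integral_fourier_haarAddCircle {T : ℝ} [Fact (0 < T)] (n : ℤ) :
    ∫ t, fourier n t ∂(AddCircle.haarAddCircle : Measure (AddCircle T)) =
      if n = 0 then 1 else 0 := by
  simpa [fourierCoeff, fourier_zero, Pi.single_apply, eq_comm] using
    congr_fun (fourierCoeff_fourier (T := T) n) 0

theorem measurePreserving_coe_restrict_Ico :
    MeasurePreserving ((↑) : ℝ → UnitAddCircle) (volume.restrict (Set.Ico 0 1))
      AddCircle.haarAddCircle := by
  have h := AddCircle.measurePreserving_mk (1 : ℝ) 0
  rwa [zero_add, ← Measure.restrict_congr_set Ico_ae_eq_Ioc,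
    AddCircle.volume_eq_smul_haarAddCircle, ENNReal.ofReal_one, one_smul] at h

theorem integral_fourier_coe_Ico (n : ℤ) :
    ∫ t in Set.Ico (0 : ℝ) 1, fourier n (t : UnitAddCircle) = if n = 0 then 1 else 0 := by
  rw [← integral_fourier_haarAddCircle (T := 1), ← measurePreserving_coe_restrict_Ico.map_eq,
    integral_map measurePreserving_coe_restrict_Ico.measurable.aemeasurable
      (map_continuous _).aestronglyMeasurable]

section Cube

variable (ι : Type*) [Fintype ι]

def cubeToTorus : (ι → ℝ) → UnitAddTorus ι := fun k i => k i

-- This product of normalised Haar measures is the measure of the `L²` space of `mFourierLp`.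
theorem measurePreserving_cubeToTorus :
    MeasurePreserving (cubeToTorus ι) (cubeMeasure ι)
      (Measure.pi fun _ => AddCircle.haarAddCircle) :=
  measurePreserving_pi _ _ fun _ => measurePreserving_coe_restrict_Ico

theorem compMeasurePreserving_cubeToTorus_surjective :
    Function.Surjective (Lp.compMeasurePreserving (E := ℂ) (p := 2) (cubeToTorus ι)
      (measurePreserving_cubeToTorus ι)) := by
  refine Lp.compMeasurePreserving_surjective _
    (g := fun x i => (AddCircle.equivIco 1 0 (x i) : ℝ)) ?_ ?_
  · exact measurable_pi_lambda _ fun i => measurable_subtype_coe.comp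
      ((AddCircle.measurableEquivIco 1 0).measurable.comp (measurable_pi_apply i))
  · have hmem (i : ι) : ∀ᵐ k ∂cubeMeasure ι, k i ∈ Set.Ico (0 : ℝ) (0 + 1) :=
      Measure.tendsto_eval_ae_ae.eventually <| by
        simpa using ae_restrict_mem (measurableSet_Ico (a := (0 : ℝ)) (b := 1))
    filter_upwards [ae_all_iff.mpr hmem] with k hk
    funext i
    exact AddCircle.equivIco_coe_of_mem (hk i)

variable {ι}

noncomputable def cubeFourier (n : ι → ℤ) : Lp ℂ 2 (cubeMeasure ι) :=
  Lp.compMeasurePreservingₗᵢ ℂ (cubeToTorus ι) (measurePreserving_cubeToTorus ι) (mFourierLp 2 n)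

theorem coeFn_cubeFourier (n : ι → ℤ) :
    cubeFourier n =ᵐ[cubeMeasure ι] mFourier n ∘ cubeToTorus ι :=
  (Lp.coeFn_compMeasurePreserving _ _).trans
    ((measurePreserving_cubeToTorus ι).quasiMeasurePreserving.ae_eq_comp (coeFn_mFourierLp 2 n))

theorem cubeFourier_ne_zero (n : ι → ℤ) : cubeFourier n ≠ 0 :=
  (map_ne_zero_iff _ (LinearIsometry.injective _)).mpr (orthonormal_mFourier.ne_zero n)

theorem dense_span_cubeFourier :
    Dense (Submodule.span ℂ (Set.range (cubeFourier (ι := ι))) : Set (Lp ℂ 2 (cubeMeasure ι))) := by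
  set Φ := Lp.compMeasurePreservingₗᵢ (E := ℂ) (p := 2) ℂ (cubeToTorus ι)
    (measurePreserving_cubeToTorus ι)
  have hdense := Submodule.dense_iff_topologicalClosure_eq_top.mpr
    (span_mFourierLp_closure_eq_top (d := ι) (p := 2) ENNReal.ofNat_ne_top)
  have himage := (compMeasurePreserving_cubeToTorus_surjective ι).denseRange.dense_image
    Φ.continuous hdense
  change Dense (Φ.toLinearMap '' _) at himage
  rwa [← Submodule.map_coe, Submodule.map_span, ← Set.range_comp] at himage

end Cube

section PartialIntegral

variable {N : ℕ}

theorem partialIntegral_congr_ae (α : Finset (Fin N)) {f g : (Fin N → ℝ) → ℂ}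
    (h : f =ᵐ[cubeMeasure (Fin N)] g) :
    partialIntegral α f =ᵐ[cubeMeasure (Fin N)] partialIntegral α g := by
  let e := MeasurableEquiv.piEquivPiSubtypeProd (fun _ : Fin N => ℝ) (· ∈ α)
  -- `convert` reconciles the two `Fintype` instances on the subtypes
  have he : MeasurePreserving e (cubeMeasure (Fin N))
      ((cubeMeasure {j // j ∈ α}).prod (cubeMeasure {j // j ∉ α})) := by
    convert measurePreserving_piEquivPiSubtypeProd
      (fun _ : Fin N => (volume : Measure ℝ).restrict (Set.Ico 0 1)) (· ∈ α) using 2 <;>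
      unfold cubeMeasure <;> congr!
  -- instance search for `SFinite` on this subtype exceeds its size limit
  have : SFinite (cubeMeasure {j // j ∉ α}) := instSFiniteOfSigmaFinite
  have hslices := ae_eq_integral_left_of_ae_eq_prod
    ((he.symm e).quasiMeasurePreserving.ae_eq_comp h)
  exact (Measure.quasiMeasurePreserving_snd.comp he.quasiMeasurePreserving).ae_eq_comp hslices

theorem partialIntegral_mFourier (α : Finset (Fin N)) (n : Fin N → ℤ) (k : Fin N → ℝ) :
    partialIntegral α (mFourier n ∘ cubeToTorus (Fin N)) k =
      if ∀ j ∈ α, n j = 0 then mFourier n (cubeToTorus (Fin N) k) else 0 := by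
  have hsplit (x : {j // j ∈ α} → ℝ) :
      mFourier n (cubeToTorus (Fin N) fun j => if h : j ∈ α then x ⟨j, h⟩ else k j) =
        (∏ i : {j // j ∈ α}, fourier (n i) (x i : UnitAddCircle)) *
          ∏ j ∈ αᶜ, fourier (n j) (k j : UnitAddCircle) := by
    rw [mFourier, ContinuousMap.coe_mk, ← Finset.prod_mul_prod_compl α, ← Finset.prod_coe_sort α]
    congr 1
    · exact Finset.prod_congr rfl fun i _ => by simp [cubeToTorus, i.2]
    · exact Finset.prod_congr rfl fun j hj => by simp [cubeToTorus, Finset.mem_compl.mp hj]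
  simp only [partialIntegral, Function.comp_apply, hsplit]
  rw [integral_mul_const, cubeMeasure, integral_fintype_prod_eq_prod
    fun (i : {j // j ∈ α}) (t : ℝ) => fourier (n i) (t : UnitAddCircle)]
  simp only [integral_fourier_coe_Ico, Finset.prod_boole, Finset.mem_univ, true_imp_iff,
    Subtype.forall]
  split_ifs with h
  · rw [one_mul, mFourier, ContinuousMap.coe_mk]
    refine Finset.prod_subset (Finset.subset_univ _) fun j _ hj => ?_
    rw [h j (by simpa using hj), fourier_zero]
  · rw [zero_mul]

theorem apply_cubeFourier (a : Finset (Fin N) → ℂ)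
    (𝒜 : Lp ℂ 2 (cubeMeasure (Fin N)) →L[ℂ] Lp ℂ 2 (cubeMeasure (Fin N)))
    (h𝒜 : ∀ u : Lp ℂ 2 (cubeMeasure (Fin N)),
      ⇑(𝒜 u) =ᵐ[cubeMeasure (Fin N)] fun k =>
        ∑ α : Finset (Fin N), a α * partialIntegral α (⇑u) k)
    (n : Fin N → ℤ) :
    𝒜 (cubeFourier n) =
      (∑ β ∈ ({j | n j = 0} : Finset (Fin N)).powerset, a β) • cubeFourier n := by
  refine Lp.ext ?_
  filter_upwards [h𝒜 (cubeFourier n), Lp.coeFn_smul (𝕜 := ℂ) _ (cubeFourier n),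
    coeFn_cubeFourier n, ae_all_iff.mpr fun β => partialIntegral_congr_ae β (coeFn_cubeFourier n)]
    with k h𝒜k hsmul hk hβ
  rw [h𝒜k, hsmul, Pi.smul_apply, hk, smul_eq_mul, Finset.sum_mul]
  simp only [hβ, partialIntegral_mFourier, mul_ite, mul_zero]
  rw [← Finset.sum_filter]
  congr 1
  ext β
  simp [Finset.subset_iff]

end PartialIntegral

theorem stmt_15_general (N : ℕ) (a : Finset (Fin N) → ℂ)
    (𝒜 : Lp ℂ 2 (cubeMeasure (Fin N)) →L[ℂ] Lp ℂ 2 (cubeMeasure (Fin N)))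
    (h𝒜 : ∀ u : Lp ℂ 2 (cubeMeasure (Fin N)),
      ⇑(𝒜 u) =ᵐ[cubeMeasure (Fin N)] fun k =>
        ∑ α : Finset (Fin N), a α * partialIntegral α (⇑u) k) :
    spectrum ℂ 𝒜 = {z : ℂ | ∃ α : Finset (Fin N), z = ∑ β ∈ α.powerset, a β} := by
  set c : Finset (Fin N) → ℂ := fun α => ∑ β ∈ α.powerset, a β
  have hrange : Set.range (fun n : Fin N → ℤ => c {j | n j = 0}) = Set.range c := by
    refine subset_antisymm (Set.range_comp_subset_range _ c) ?_
    rintro - ⟨α, rfl⟩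
    refine ⟨fun j => if j ∈ α then 0 else 1, congr_arg c ?_⟩
    ext j
    by_cases hj : j ∈ α <;> simp [hj]
  rw [ContinuousLinearMap.spectrum_eq_range_of_dense_span_eigenvectors 𝒜 cubeFourier _
    dense_span_cubeFourier cubeFourier_ne_zero (apply_cubeFourier a 𝒜 h𝒜)
    (hrange ▸ Set.finite_range c), hrange]
  ext z
  simp [c, eq_comm]

/-- the spectrum of the operator
`𝒜u = Σ_α a_α ∫_{[0,1)^{|α|}} u(· with α-coordinates replaced) dx_α` on
`L²([0,1)^N)` equals the finite set `{Σ_{β ⊆ α} a_β : α ⊆ {1,...,N}}`. -/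
theorem stmt_15 (N : ℕ) (hN : 0 < N) (a : Finset (Fin N) → ℂ)
    (𝒜 : Lp ℂ 2 (cubeMeasure (Fin N)) →L[ℂ] Lp ℂ 2 (cubeMeasure (Fin N)))
    (h𝒜 : ∀ u : Lp ℂ 2 (cubeMeasure (Fin N)),
      ⇑(𝒜 u) =ᵐ[cubeMeasure (Fin N)] fun k =>
        ∑ α : Finset (Fin N), a α * partialIntegral α (⇑u) k) :
    spectrum ℂ 𝒜 = {z : ℂ | ∃ α : Finset (Fin N), z = ∑ β ∈ α.powerset, a β} :=
  stmt_15_general N a 𝒜 h𝒜
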